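/- Let n ≥ 2 and t = n(n² − 1)/6 (i.e., 6t = n(n² − 1)), t ≥ 1, and N = n^t. Then for every bijection v : Fin N → (Fin t → Fin n) satisfying hammingDist (v i) (v (i+k)) ≥ t + 1 − k for all i and all 1 ≤ k < t with i + k < N, it holds that for every index i and every s with 1 ≤ s ≤ n and i + s < N, hammingDist (v i) (v (i+s)) = t − (s − 1); that is, v i and v (i+s) share exactly s − 1 coordinates. -/
import Mathlib

open Finset

private lemma sum_key_aux (m : ℕ) :
    6 * (∑ b ∈ range (m + 1), ∑ a ∈ range b, (b - a - 1)) + m = m ^ 3 := by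
  induction m with
  | zero => simp
  | succ m ih =>
    rw [sum_range_succ]
    have h1 : ∑ a ∈ range (m + 1), (m + 1 - a - 1) = ∑ a ∈ range (m + 1), a := by
      have h2 := Finset.sum_range_reflect (fun i => i) (m + 1)
      calc ∑ a ∈ range (m + 1), (m + 1 - a - 1)
          = ∑ a ∈ range (m + 1), (m + 1 - 1 - a) := by
            apply Finset.sum_congr rfl; intro a _; omega
        _ = ∑ a ∈ range (m + 1), a := h2
    rw [h1]
    have h3 : (∑ a ∈ range (m + 1), a) * 2 = (m + 1) * m := by
      simpa using Finset.sum_range_id_mul_two (m + 1)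
    set S := ∑ b ∈ range (m + 1), ∑ a ∈ range b, (b - a - 1) with hS
    set A := ∑ a ∈ range (m + 1), a with hA
    have hcalc : (m + 1) ^ 3 = (6 * S + m) + 3 * (A * 2) + 1 := by
      rw [ih, h3]; ring
    omega

/-- Corollary (BoundaryForced): for t = n(n² − 1)/6, in any ordering of K_n^t inducing a
consecutive radio labeling, v i and v (i+s) share exactly s − 1 coordinates for 1 ≤ s ≤ n. -/
theorem stmt_8 (n t : ℕ) (hn : 2 ≤ n) (ht : 1 ≤ t) (hbound : 6 * t = n * (n ^ 2 - 1))
    (N : ℕ) (hN : N = n ^ t)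
    (v : Fin N → Fin t → Fin n) (hbij : Function.Bijective v)
    (hrad : ∀ i k : ℕ, 1 ≤ k → k < t → (h : i + k < N) →
      hammingDist (v ⟨i, by omega⟩) (v ⟨i + k, h⟩) ≥ t + 1 - k) :
    ∀ i s : ℕ, 1 ≤ s → s ≤ n → (h : i + s < N) →
      hammingDist (v ⟨i, by omega⟩) (v ⟨i + s, h⟩) = t - (s - 1) := by
  intro i s hs1 hsn h
  by_cases hn2 : n = 2
  · -- special case n = 2, t = 1, N = 2
    subst hn2
    have ht1 : t = 1 := by norm_num at hbound; omega
    have hN2 : N = 2 := by rw [hN, ht1]; norm_num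
    have hi0 : i = 0 ∧ s = 1 := by omega
    obtain ⟨hi, hs⟩ := hi0
    subst hi; subst hs
    have hne : v ⟨0, by omega⟩ ≠ v ⟨0 + 1, h⟩ := by
      intro he
      have := hbij.injective he
      simp [Fin.ext_iff] at this
    have h1 : hammingDist (v ⟨0, by omega⟩) (v ⟨0 + 1, h⟩) ≠ 0 := by
      rw [Ne, hammingDist_eq_zero]; exact hne
    have h2 : hammingDist (v ⟨0, by omega⟩) (v ⟨0 + 1, h⟩) ≤ Fintype.card (Fin t) :=
      hammingDist_le_card_fintype
    rw [Fintype.card_fin] at h2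
    omega
  · have hn3 : 3 ≤ n := by omega
    have h9 : 9 ≤ n ^ 2 := by nlinarith
    have h8 : 8 ≤ n ^ 2 - 1 := by omega
    have hx : 8 * n ≤ 6 * t := by
      rw [hbound]
      calc 8 * n = n * 8 := by ring
        _ ≤ n * (n ^ 2 - 1) := Nat.mul_le_mul_left n h8
    have hnt : n < t := by omega
    have hNn : n + 2 ≤ N := by
      rw [hN]
      calc n + 2 ≤ n * n := by nlinarith
        _ = n ^ 2 := (sq n).symm
        _ ≤ n ^ t := Nat.pow_le_pow_right (by omega) (by omega)
    obtain ⟨j, hj1, hj2, hjn⟩ : ∃ j, j ≤ i ∧ i + s ≤ j + n ∧ j + n < N := by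
      by_cases hc : i + n < N
      · exact ⟨i, le_refl _, by omega, hc⟩
      · exact ⟨N - 1 - n, by omega, by omega, by omega⟩
    -- the window function
    set u : ℕ → Fin t → Fin n :=
      fun m => v ⟨j + min m n, by have := min_le_right m n; omega⟩ with hu_def
    have hu : ∀ m, m ≤ n → ∀ (hm : j + m < N), u m = v ⟨j + m, hm⟩ := by
      intro m hm _
      simp only [hu_def, min_eq_left hm]
    -- agreement count
    set agr : ℕ → ℕ → ℕ :=
      fun a b => (Finset.univ.filter fun c : Fin t => u a c = u b c).card with hagr_def
    have dist_agr : ∀ a b : ℕ, hammingDist (u a) (u b) + agr a b = t := by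
      intro a b
      have h0 := Finset.card_filter_add_card_filter_not
        (s := (Finset.univ : Finset (Fin t))) (p := fun c => u a c = u b c)
      simp only [Finset.card_univ, Fintype.card_fin] at h0
      have h1 : hammingDist (u a) (u b)
          = (Finset.univ.filter fun c : Fin t => ¬ (u a c = u b c)).card := rfl
      simp only [hagr_def, h1]
      omega
    have upper : ∀ a b : ℕ, a < b → b ≤ n → agr a b ≤ b - a - 1 := by
      intro a b hab hbn
      have hk1 : 1 ≤ b - a := by omega
      have hk2 : b - a < t := by omega
      have h3 : (j + a) + (b - a) < N := by omega
      have pa : j + a < N := by omega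
      have pb : j + b < N := by omega
      have hr2 : hammingDist (u a) (u b) ≥ t + 1 - (b - a) := by
        rw [hu a (by omega) pa, hu b (by omega) pb]
        have eidx : (⟨j + b, pb⟩ : Fin N) = ⟨j + a + (b - a), h3⟩ :=
          Fin.ext (show j + b = j + a + (b - a) by omega)
        rw [eidx]
        exact hrad (j + a) (b - a) hk1 hk2 h3
      have hd := dist_agr a b
      omega
    -- total sums
    have h6t : 6 * t + n = n ^ 3 := by
      obtain ⟨m, hm⟩ : ∃ m, n ^ 2 = 1 + m := ⟨n ^ 2 - 1, by omega⟩
      have h3 : n ^ 3 = n * (1 + m) := by rw [show n ^ 3 = n * n ^ 2 by ring, hm]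
      rw [hbound, hm, h3]
      simp only [Nat.add_sub_cancel_left]
      ring
    have hMt : (∑ b ∈ range (n + 1), ∑ a ∈ range b, (b - a - 1)) = t := by
      have := sum_key_aux n
      omega
    have hEach : ∀ c : Fin t, ∃ a b : ℕ, a < b ∧ b ≤ n ∧ u a c = u b c := by
      intro c
      obtain ⟨x, y, hxy, hval⟩ := Fintype.exists_ne_map_eq_of_card_lt
        (fun m : Fin (n + 1) => u m.val c) (by simp)
      rcases lt_or_gt_of_ne hxy with hlt | hgt
      · exact ⟨x.val, y.val, hlt, Nat.lt_succ_iff.mp y.isLt, hval⟩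
      · exact ⟨y.val, x.val, hgt, Nat.lt_succ_iff.mp x.isLt, hval.symm⟩
    have hswap : ∑ b ∈ range (n + 1), ∑ a ∈ range b, agr a b
        = ∑ c : Fin t, ∑ b ∈ range (n + 1), ∑ a ∈ range b,
            (if u a c = u b c then 1 else 0) := by
      have h1 : ∀ a b : ℕ, agr a b = ∑ c : Fin t, (if u a c = u b c then 1 else 0) := by
        intro a b
        simp only [hagr_def]
        exact Finset.card_filter _ _
      calc ∑ b ∈ range (n + 1), ∑ a ∈ range b, agr a b
          = ∑ b ∈ range (n + 1), ∑ c : Fin t, ∑ a ∈ range b,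
              (if u a c = u b c then 1 else 0) := by
            apply Finset.sum_congr rfl; intro b _
            rw [Finset.sum_comm]
            apply Finset.sum_congr rfl; intro a _
            exact h1 a b
        _ = _ := Finset.sum_comm
    have lowerT : t ≤ ∑ b ∈ range (n + 1), ∑ a ∈ range b, agr a b := by
      rw [hswap]
      have h1 : ∀ c : Fin t, 1 ≤ ∑ b ∈ range (n + 1), ∑ a ∈ range b,
          (if u a c = u b c then 1 else 0) := by
        intro c
        obtain ⟨a, b, hab, hbn, heq⟩ := hEach c
        calc 1 = (if u a c = u b c then 1 else 0) := by simp [heq]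
          _ ≤ ∑ a' ∈ range b, (if u a' c = u b c then 1 else 0) :=
              Finset.single_le_sum (f := fun a' => if u a' c = u b c then 1 else 0)
                (fun _ _ => Nat.zero_le _) (Finset.mem_range.mpr hab)
          _ ≤ ∑ b' ∈ range (n + 1), ∑ a' ∈ range b', (if u a' c = u b' c then 1 else 0) :=
              Finset.single_le_sum
                (f := fun b' => ∑ a' ∈ range b', (if u a' c = u b' c then 1 else 0))
                (fun _ _ => Nat.zero_le _) (Finset.mem_range.mpr (by omega))
      calc t = ∑ _c : Fin t, 1 := by simp
        _ ≤ _ := Finset.sum_le_sum (fun c _ => h1 c)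
    have upperT : ∀ b ∈ range (n + 1), ∑ a ∈ range b, agr a b
        ≤ ∑ a ∈ range b, (b - a - 1) := by
      intro b hb
      exact Finset.sum_le_sum (fun a ha =>
        upper a b (Finset.mem_range.mp ha)
          (by have := Finset.mem_range.mp hb; omega))
    have hTeq : ∑ b ∈ range (n + 1), ∑ a ∈ range b, agr a b
        = ∑ b ∈ range (n + 1), ∑ a ∈ range b, (b - a - 1) := by
      have := Finset.sum_le_sum upperT
      omega
    have hEq1 := (Finset.sum_eq_sum_iff_of_le upperT).mp hTeq
    -- apply to our pair
    set a := i - j with ha_def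
    set b := i + s - j with hb_def
    have hab : a < b := by omega
    have hbn : b ≤ n := by omega
    have hEq2 := (Finset.sum_eq_sum_iff_of_le (fun a' ha' =>
        upper a' b (Finset.mem_range.mp ha') hbn)).mp
      (hEq1 b (Finset.mem_range.mpr (by omega)))
    have hagr : agr a b = b - a - 1 := hEq2 a (Finset.mem_range.mpr hab)
    have e1 : u a = v ⟨i, by omega⟩ := by
      rw [hu a (by omega) (by omega)]
      exact congrArg v (Fin.ext (show j + a = i by omega))
    have e2 : u b = v ⟨i + s, h⟩ := by
      rw [hu b (by omega) (by omega)]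
      exact congrArg v (Fin.ext (show j + b = i + s by omega))
    have hd := dist_agr a b
    rw [e1, e2] at hd
    omega
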